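/- arXiv:1708.01569 — 3 statements merged into one kernel-verified Lean document; each statement's English description precedes it below -/
import Mathlib

section
/- Every non-identity element of PGL(2,ℂ) is either an involution or the composition of two involutions of PGL(2,ℂ). -/
/-- The projective general linear group `PGL(2, ℂ)`. -/
abbrev PGL2C : Type :=
  GL (Fin 2) ℂ ⧸ Subgroup.center (GL (Fin 2) ℂ)

/-- If `J` is a self-inverse matrix and `tr (g * J) = 0`, then the image of `g` in
`PGL(2, ℂ)` is a product of two involutions. -/
lemma key (g : GL (Fin 2) ℂ) (J : Matrix (Fin 2) (Fin 2) ℂ) (hJ : J * J = 1)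
    (htr : ((g : Matrix (Fin 2) (Fin 2) ℂ) * J).trace = 0) :
    ∃ ι₁ ι₂ : PGL2C, ι₁ * ι₁ = 1 ∧ ι₂ * ι₂ = 1 ∧
      (QuotientGroup.mk g : PGL2C) = ι₂ * ι₁ := by
  set J' : GL (Fin 2) ℂ := ⟨J, J, hJ, hJ⟩ with hJ'
  have hJ'sq : J' * J' = 1 := Units.ext hJ
  refine ⟨QuotientGroup.mk J', QuotientGroup.mk (g * J'), ?_, ?_, ?_⟩
  · rw [← QuotientGroup.mk_mul, hJ'sq]; rfl
  · rw [← QuotientGroup.mk_mul, QuotientGroup.eq_one_iff]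
    rw [Subgroup.mem_center_iff]
    intro h
    have hA : ∃ c : ℂ, ((g * J' : GL (Fin 2) ℂ) : Matrix (Fin 2) (Fin 2) ℂ) *
        ((g * J' : GL (Fin 2) ℂ) : Matrix (Fin 2) (Fin 2) ℂ) = c • (1 : Matrix (Fin 2) (Fin 2) ℂ) := by
      set A : Matrix (Fin 2) (Fin 2) ℂ := (g : Matrix (Fin 2) (Fin 2) ℂ) * J with hA
      refine ⟨A 0 0 * A 0 0 + A 0 1 * A 1 0, ?_⟩
      have ht : A 0 0 + A 1 1 = 0 := by
        simpa [Matrix.trace_fin_two] using htr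
      have h11 : A 1 1 = -(A 0 0) := by linear_combination ht
      have hval : ((g * J' : GL (Fin 2) ℂ) : Matrix (Fin 2) (Fin 2) ℂ) = A := rfl
      rw [hval]
      ext i j
      fin_cases i <;> fin_cases j <;>
        simp [Matrix.mul_apply, Fin.sum_univ_two, Matrix.smul_apply, Matrix.one_apply, h11] <;> ring
    obtain ⟨c, hc⟩ := hA
    refine Units.ext ?_
    have hJv : (J' : Matrix (Fin 2) (Fin 2) ℂ) = J := rfl
    show (h : Matrix (Fin 2) (Fin 2) ℂ) * _ = _ * (h : Matrix (Fin 2) (Fin 2) ℂ)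
    simp only [Units.val_mul, hJv] at hc ⊢
    rw [hc, Matrix.mul_smul, Matrix.smul_mul, Matrix.mul_one, Matrix.one_mul]
  · rw [← QuotientGroup.mk_mul, mul_assoc, hJ'sq, mul_one]

/-- Every non-identity element of `PGL(2, ℂ)` is either an involution or the
composition of two involutions of `PGL(2, ℂ)`. -/
theorem nonidentity_homography_involution_or_comp_two_involutions
    (ν : PGL2C) (hν : ν ≠ 1) :
    ν * ν = 1 ∨ ∃ ι₁ ι₂ : PGL2C, ι₁ * ι₁ = 1 ∧ ι₂ * ι₂ = 1 ∧ ν = ι₂ * ι₁ := by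
  right
  obtain ⟨g, rfl⟩ := QuotientGroup.mk_surjective ν
  set M : Matrix (Fin 2) (Fin 2) ℂ := (g : Matrix (Fin 2) (Fin 2) ℂ) with hM
  by_cases hr : M 1 0 ≠ 0
  · refine key g !![1, (M 1 1 - M 0 0) / M 1 0; 0, -1] ?_ ?_
    · ext i j; fin_cases i <;> fin_cases j <;>
        simp [Matrix.mul_apply, Fin.sum_univ_two, Matrix.one_apply]
    · rw [Matrix.trace_fin_two]
      simp only [Matrix.mul_apply, Fin.sum_univ_two, ← hM]
      simp
      field_simp
      ring
  · push_neg at hr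
    by_cases hq : M 0 1 ≠ 0
    · refine key g !![1, 0; (M 1 1 - M 0 0) / M 0 1, -1] ?_ ?_
      · ext i j; fin_cases i <;> fin_cases j <;>
          simp [Matrix.mul_apply, Fin.sum_univ_two, Matrix.one_apply]
      · rw [Matrix.trace_fin_two]
        simp only [Matrix.mul_apply, Fin.sum_univ_two, ← hM]
        simp
        ring_nf
        field_simp
        ring
    · push_neg at hq
      by_cases hd : M 0 0 ≠ M 1 1
      · refine key g !![0, 1; 1, 0] ?_ ?_
        · ext i j; fin_cases i <;> fin_cases j <;>
            simp [Matrix.mul_apply, Fin.sum_univ_two, Matrix.one_apply]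
        · rw [Matrix.trace_fin_two]
          simp only [Matrix.mul_apply, Fin.sum_univ_two, ← hM]
          simp [hr, hq]
      · push_neg at hd
        exfalso
        apply hν
        rw [QuotientGroup.eq_one_iff, Subgroup.mem_center_iff]
        intro h
        have hMs : M = M 0 0 • (1 : Matrix (Fin 2) (Fin 2) ℂ) := by
          ext i j
          fin_cases i <;> fin_cases j <;>
            simp [hr, hq, ← hd, Matrix.smul_apply, Matrix.one_apply]
        refine Units.ext ?_
        show (h : Matrix (Fin 2) (Fin 2) ℂ) * M = M * (h : Matrix (Fin 2) (Fin 2) ℂ)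
        rw [hMs, Matrix.mul_smul, Matrix.smul_mul, Matrix.mul_one, Matrix.one_mul]
end

section
/- Let k be a field of characteristic not 2 and n ≥ 2. Every element of SL(n,k) can be written as a product of at most 2(n+1) elements of GL(n,k) each of which squares to the identity. -/
namespace InvolProof
open Matrix

variable {k : Type*} [Field k] {n : ℕ}

def Vm (u w : Fin n → k) : Matrix (Fin n) (Fin n) k := Matrix.of fun a b => u a * w b

lemma Vm_apply (u w : Fin n → k) (a b : Fin n) : Vm u w a b = u a * w b := rfl

lemma Vm_mul (u w : Fin n → k) (A : Matrix (Fin n) (Fin n) k) :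
    Vm u w * A = Vm u (fun b => ∑ l, w l * A l b) := by
  ext a b
  simp [Vm, Matrix.mul_apply, Finset.mul_sum, mul_assoc]

lemma mul_Vm (A : Matrix (Fin n) (Fin n) k) (u w : Fin n → k) :
    A * Vm u w = Vm (fun a => ∑ l, A a l * u l) w := by
  ext a b
  simp [Vm, Matrix.mul_apply, Finset.sum_mul, mul_assoc]

lemma sum_two (i j : Fin n) (hij : i ≠ j) (c1 c2 : k) (f : Fin n → k) :
    (∑ l, (if l = i then c1 else if l = j then c2 else 0) * f l) = c1 * f i + c2 * f j := by
  classical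
  rw [← Finset.sum_subset (Finset.subset_univ ({i, j} : Finset (Fin n)))]
  · rw [Finset.sum_pair hij]
    simp [hij.symm, Ne.symm hij]
  · intro l _ hl
    simp only [Finset.mem_insert, Finset.mem_singleton, not_or] at hl
    simp [hl.1, hl.2]

lemma Vm_sq (u w : Fin n → k) (h : (∑ l, w l * u l) = -2) :
    (1 + Vm u w) * (1 + Vm u w) = 1 := by
  rw [mul_add, add_mul, add_mul, one_mul, mul_one, Vm_mul]
  have : (Vm u (fun b => ∑ l, w l * Vm u w l b) : Matrix (Fin n) (Fin n) k)
      = Vm u (fun b => (-2 : k) * w b) := by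
    ext a b
    simp only [Vm_apply]
    rw [show (∑ x, w x * (u x * w b)) = (∑ l, w l * u l) * w b by
      rw [Finset.sum_mul]; congr 1; ext l; ring, h]
  rw [this]
  ext a b
  simp only [Matrix.add_apply, Vm_apply, Matrix.one_apply, Matrix.one_mul]
  ring

/-- A matrix is `i`-reduced: rows and columns with index `< i` are cleared off diagonal. -/
def Red (i : ℕ) (A : Matrix (Fin n) (Fin n) k) : Prop :=
  ∀ j l : Fin n, (j : ℕ) < i → j ≠ l → A j l = 0 ∧ A l j = 0

def ColOK (i : Fin n) (c : k) (A : Matrix (Fin n) (Fin n) k) : Prop :=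
  ∀ l, A l i = if l = i then c else 0

def RowOK (i : Fin n) (c : k) (A : Matrix (Fin n) (Fin n) k) : Prop :=
  ∀ l, A i l = if l = i then c else 0

lemma step1 (i : Fin n) (A : Matrix (Fin n) (Fin n) k) (hA : IsUnit A.det)
    (hred : Red (i : ℕ) A) :
    ∃ s, s * s = 1 ∧ Red (i : ℕ) (s * A) ∧ ∃ c, c ≠ 0 ∧ ColOK i c (s * A) := by
  classical
  by_cases hc : ∃ j, j ≠ i ∧ A j i ≠ 0
  · obtain ⟨j, hji, hxj⟩ := hc
    have hjge : ¬ ((j : ℕ) < (i : ℕ)) := fun hlt => hxj (hred j i hlt hji).1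
    set x : Fin n → k := fun l => A l i with hx
    set w : Fin n → k := fun l => if l = i then x j else if l = j then -(1 + x i) else 0 with hw
    set u : Fin n → k := fun l => (-(x j))⁻¹ * ((if l = i then 1 else 0) - x l) with hu
    have hxj' : x j ≠ 0 := hxj
    refine ⟨1 + Vm u w, ?_, ?_, ?_⟩
    · apply Vm_sq
      rw [hw]
      rw [sum_two i j (Ne.symm hji) _ _ u]
      rw [hu]
      simp only [if_pos rfl, if_neg hji]
      have key : ∀ t c : k, t ≠ 0 →
          t * ((-t)⁻¹ * (1 - c)) + -(1 + c) * ((-t)⁻¹ * (0 - c * 0)) = -2 → True := fun _ _ _ _ => trivial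
      have hne2 : (-(x j)) ≠ 0 := neg_ne_zero.mpr hxj'
      field_simp
      rw [if_pos trivial]; ring
    · -- Red preserved
      have hkey : ∀ a b : Fin n, ((1 + Vm u w) * A) a b
          = A a b + u a * (x j * A i b - (1 + x i) * A j b) := by
        intro a b
        rw [add_mul, one_mul, Vm_mul]
        rw [Matrix.add_apply, Vm_apply]
        congr 1
        congr 1
        rw [hw, sum_two i j (Ne.symm hji)]
        ring
      intro j' l hlt hne
      have hj'i : j' ≠ i := by
        intro hh; rw [hh] at hlt; exact lt_irrefl _ hlt
      have huj' : u j' = 0 := by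
        rw [hu]
        simp only [if_neg hj'i]
        have : x j' = 0 := (hred j' i hlt hj'i).1
        rw [this]; ring
      constructor
      · rw [hkey, huj', (hred j' l hlt hne).1]; ring
      · rw [hkey]
        have hAij' : A i j' = 0 := (hred j' i hlt hj'i).2
        have hj'j : j' ≠ j := by
          intro hh; rw [← hh] at hjge; exact hjge hlt
        have hAjj' : A j j' = 0 := (hred j' j hlt hj'j).2
        rw [hAij', hAjj', (hred j' l hlt hne).2]; ring
    · refine ⟨1, one_ne_zero, ?_⟩
      intro l
      have hkey : ((1 + Vm u w) * A) l i
          = A l i + u l * (x j * A i i - (1 + x i) * A j i) := by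
        rw [add_mul, one_mul, Vm_mul]
        rw [Matrix.add_apply, Vm_apply]
        congr 1
        congr 1
        rw [hw, sum_two i j (Ne.symm hji)]
        ring
      rw [hkey, hu]
      have h1 : x j * A i i - (1 + x i) * A j i = -(x j) := by
        show x j * x i - (1 + x i) * x j = -(x j)
        ring
      rw [h1]
      show x l + (-(x j))⁻¹ * ((if l = i then 1 else 0) - x l) * (-(x j)) = _
      have hne2 : (-(x j)) ≠ 0 := neg_ne_zero.mpr hxj'
      rw [mul_comm ((-(x j))⁻¹) _, mul_assoc, inv_mul_cancel₀ hne2, mul_one]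
      ring
  · push_neg at hc
    refine ⟨1, one_mul 1, by rw [one_mul]; exact hred, A i i, ?_, ?_⟩
    · intro h0
      have hcol : ∀ l, A l i = 0 := by
        intro l
        by_cases hl : l = i
        · rw [hl, h0]
        · exact hc l hl
      have hmv : A.mulVec (Pi.single i 1) = 0 := by
        ext l
        rw [Matrix.mulVec_single]
        simp [hcol l]
      have hdet : A.det = 0 := by
        rw [← Matrix.exists_mulVec_eq_zero_iff]
        refine ⟨Pi.single i 1, fun h => one_ne_zero (α := k) ?_, hmv⟩
        have := congrFun h i
        simpa using this
      rw [hdet] at hA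
      exact one_ne_zero (isUnit_zero_iff.mp hA).symm
    · intro l
      rw [one_mul]
      by_cases hl : l = i
      · rw [hl, if_pos rfl]
      · rw [if_neg hl]; exact hc l hl

lemma step2 (i : Fin n) (A : Matrix (Fin n) (Fin n) k) (hred : Red (i : ℕ) A)
    (c : k) (hc : c ≠ 0) (hcol : ColOK i c A) :
    ∃ s, s * s = 1 ∧ Red ((i : ℕ) + 1) (A * s) := by
  classical
  have hAii : A i i = c := by
    have := hcol i; rwa [if_pos rfl] at this
  by_cases hr : ∃ j, j ≠ i ∧ A i j ≠ 0
  · obtain ⟨j, hji, hyj⟩ := hr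
    have hjge : ¬ ((j : ℕ) < (i : ℕ)) := by
      intro hlt
      exact hyj (hred j i hlt hji).2
    set y : Fin n → k := fun l => A i l with hy
    have hyj' : y j ≠ 0 := hyj
    have hyi : y i = c := hAii
    set u : Fin n → k := fun l => if l = i then y j else if l = j then -(c + y i) else 0 with hu
    set w : Fin n → k := fun l => (-(c * y j))⁻¹ * ((if l = i then c else 0) - y l) with hw
    have hcyj : c * y j ≠ 0 := mul_ne_zero hc hyj'
    have hwi : w i = 0 := by
      simp only [hw]
      rw [if_true, hyi]
      ring
    have hkey : ∀ a b : Fin n, (A * (1 + Vm u w)) a b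
        = A a b + (A a i * y j - A a j * (c + y i)) * w b := by
      intro a b
      rw [mul_add, mul_one, mul_Vm, Matrix.add_apply, Vm_apply]
      congr 2
      rw [hu]
      rw [show (∑ l, A a l * u l)
          = ∑ l, (if l = i then y j else if l = j then -(c + y i) else 0) * A a l by
        refine Finset.sum_congr rfl fun l _ => ?_
        simp only [hu]
        split_ifs <;> ring]
      rw [sum_two i j (Ne.symm hji)]
      ring
    refine ⟨1 + Vm u w, ?_, ?_⟩
    · apply Vm_sq
      rw [show (∑ l, w l * u l)
          = ∑ l, (if l = i then y j else if l = j then -(c + y i) else 0) * w l by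
        refine Finset.sum_congr rfl fun l _ => ?_
        simp only [hu]
        ring]
      rw [sum_two i j (Ne.symm hji), hwi]
      simp only [hw, if_neg hji]
      rw [hyi]
      have h2 : (-(c * y j))⁻¹ * (0 - y j) = c⁻¹ := by
        rw [inv_neg, zero_sub, mul_inv, neg_mul, mul_neg, neg_neg, mul_assoc,
          inv_mul_cancel₀ hyj', mul_one]
      rw [h2, mul_zero, zero_add, neg_mul, add_mul, mul_inv_cancel₀ hc]
      norm_num
    · -- Red (i+1)
      have hrow : ∀ b, (A * (1 + Vm u w)) i b = if b = i then c else 0 := by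
        intro b
        rw [hkey]
        have h1 : A i i * y j - A i j * (c + y i) = -(c * y j) := by
          show y i * y j - y j * (c + y i) = -(c * y j)
          ring
        rw [h1, hw]
        have hne2 : (-(c * y j)) ≠ 0 := neg_ne_zero.mpr hcyj
        rw [show (-(c * y j)) * ((-(c * y j))⁻¹ * ((if b = i then c else 0) - y b))
            = (if b = i then c else 0) - y b by
          rw [← mul_assoc, mul_inv_cancel₀ hne2, one_mul]]
        show y b + _ = _
        ring
      have hcola : ∀ a, (A * (1 + Vm u w)) a i = if a = i then c else 0 := by
        intro a
        rw [hkey, hwi]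
        rw [hcol a]
        ring_nf
      intro j' l hlt hne
      by_cases hj'i : j' = i
      · subst hj'i
        constructor
        · rw [hrow l, if_neg (Ne.symm hne)]
        · rw [hcola l, if_neg (Ne.symm hne)]
      · have hlt' : (j' : ℕ) < (i : ℕ) := by
          rcases Nat.lt_succ_iff_lt_or_eq.mp hlt with h | h
          · exact h
          · exact absurd (Fin.ext h) hj'i
        have hj'j : j' ≠ j := by
          intro hh; rw [← hh] at hjge; exact hjge hlt'
        have hUj' : A j' i * y j - A j' j * (c + y i) = 0 := by
          have h1 : A j' i = 0 := by
            rw [hcol j', if_neg hj'i]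
          have h2 : A j' j = 0 := (hred j' j hlt' hj'j).1
          rw [h1, h2]; ring
        have hwj' : w j' = 0 := by
          rw [hw]
          have h1 : y j' = 0 := (hred j' i hlt' hj'i).2
          simp only [if_neg hj'i]
          rw [h1]; ring
        constructor
        · rw [hkey, hUj', (hred j' l hlt' hne).1]; ring
        · rw [hkey, hwj', (hred j' l hlt' hne).2]; ring
  · push_neg at hr
    refine ⟨1, one_mul 1, ?_⟩
    rw [mul_one]
    intro j' l hlt hne
    by_cases hj'i : j' = i
    · subst hj'i
      constructor
      · exact hr l (Ne.symm hne)
      · rw [hcol l, if_neg (Ne.symm hne)]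
    · have hlt' : (j' : ℕ) < (i : ℕ) := by
        rcases Nat.lt_succ_iff_lt_or_eq.mp hlt with h | h
        · exact h
        · exact absurd (Fin.ext h) hj'i
      exact hred j' l hlt' hne

lemma step (i : Fin n) (A : Matrix (Fin n) (Fin n) k) (hA : IsUnit A.det)
    (hred : Red (i : ℕ) A) :
    ∃ s1 s2 : Matrix (Fin n) (Fin n) k, s1 * s1 = 1 ∧ s2 * s2 = 1 ∧
      Red ((i : ℕ) + 1) (s1 * A * s2) := by
  obtain ⟨s1, hs1, hred1, c, hc, hcol⟩ := step1 i A hA hred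
  obtain ⟨s2, hs2, hred2⟩ := step2 i (s1 * A) hred1 c hc hcol
  exact ⟨s1, s2, hs1, hs2, hred2⟩

lemma prod_sq_list (L : List (Matrix (Fin n) (Fin n) k)) (h : ∀ M ∈ L, M * M = 1) :
    L.prod * L.reverse.prod = 1 := by
  induction L with
  | nil => simp
  | cons a t ih =>
    rw [List.prod_cons, List.reverse_cons, List.prod_append, List.prod_singleton]
    have ha : a * a = 1 := h a List.mem_cons_self
    have ht : t.prod * t.reverse.prod = 1 := ih fun M hM => h M (List.mem_cons_of_mem a hM)
    calc a * t.prod * (t.reverse.prod * a) = a * (t.prod * t.reverse.prod) * a := by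
          noncomm_ring
      _ = 1 := by rw [ht, mul_one, ha]

lemma rev_prod_sq_list (L : List (Matrix (Fin n) (Fin n) k)) (h : ∀ M ∈ L, M * M = 1) :
    L.reverse.prod * L.prod = 1 := by
  have := prod_sq_list L.reverse (fun M hM => h M (List.mem_reverse.mp hM))
  rwa [List.reverse_reverse] at this

lemma det_sq_list (L : List (Matrix (Fin n) (Fin n) k)) (h : ∀ M ∈ L, M * M = 1) :
    L.prod.det * L.prod.det = 1 := by
  induction L with
  | nil => simp
  | cons a t ih =>
    have ha : a * a = 1 := h a List.mem_cons_self
    have ha' : a.det * a.det = 1 := by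
      rw [← Matrix.det_mul, ha, Matrix.det_one]
    have ht := ih fun M hM => h M (List.mem_cons_of_mem a hM)
    rw [List.prod_cons, Matrix.det_mul]
    calc a.det * t.prod.det * (a.det * t.prod.det)
        = (a.det * a.det) * (t.prod.det * t.prod.det) := by ring
      _ = 1 := by rw [ha', ht, mul_one]

lemma isUnit_prod_list (L : List (Matrix (Fin n) (Fin n) k)) (h : ∀ M ∈ L, M * M = 1) :
    IsUnit L.prod :=
  ⟨⟨L.prod, L.reverse.prod, prod_sq_list L h, rev_prod_sq_list L h⟩, rfl⟩

lemma reduce : ∀ (i : ℕ), i ≤ n → ∀ A : Matrix (Fin n) (Fin n) k, IsUnit A.det →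
    ∃ L R : List (Matrix (Fin n) (Fin n) k),
      (∀ M ∈ L, M * M = 1) ∧ (∀ M ∈ R, M * M = 1) ∧
      L.length = i ∧ R.length = i ∧ Red i (L.prod * A * R.prod) := by
  intro i
  induction i with
  | zero =>
    intro _ A hA
    exact ⟨[], [], by simp, by simp, rfl, rfl, by
      intro j l hlt _
      exact absurd hlt (Nat.not_lt_zero _)⟩
  | succ i ih =>
    intro hi A hA
    obtain ⟨L, R, hL, hR, hLl, hRl, hred⟩ := ih (Nat.le_of_succ_le hi) A hA
    have hin : i < n := Nat.lt_of_lt_of_le (Nat.lt_succ_self i) hi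
    set B := L.prod * A * R.prod with hB
    have hBdet : IsUnit B.det := by
      rw [hB, Matrix.det_mul, Matrix.det_mul]
      exact (((isUnit_prod_list L hL).map (Matrix.detMonoidHom)).mul hA).mul
        ((isUnit_prod_list R hR).map (Matrix.detMonoidHom))
    obtain ⟨s1, s2, hs1, hs2, hred2⟩ := step (⟨i, hin⟩ : Fin n) B hBdet hred
    refine ⟨s1 :: L, R ++ [s2], ?_, ?_, ?_, ?_, ?_⟩
    · intro M hM
      rcases List.mem_cons.mp hM with h | h
      · rw [h]; exact hs1
      · exact hL M h
    · intro M hM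
      rcases List.mem_append.mp hM with h | h
      · exact hR M h
      · rw [List.mem_singleton.mp h]; exact hs2
    · simp [hLl]
    · simp [hRl]
    · have : (s1 :: L).prod * A * (R ++ [s2]).prod = s1 * B * s2 := by
        rw [List.prod_cons, List.prod_append, List.prod_singleton, hB]
        noncomm_ring
      rw [this]
      exact hred2

def E (c : Fin n → k) (π : Fin n → Fin n) : Matrix (Fin n) (Fin n) k :=
  Matrix.of fun i j => if j = π i then c i else 0

lemma E_mul (c c' : Fin n → k) (π π' : Fin n → Fin n) :
    E c π * E c' π' = E (fun i => c i * c' (π i)) (fun i => π' (π i)) := by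
  ext a b
  rw [Matrix.mul_apply, Finset.sum_eq_single (π a)]
  · show (if π a = π a then c a else 0) * (if b = π' (π a) then c' (π a) else 0) = _
    rw [if_pos rfl]
    show _ = if b = π' (π a) then c a * c' (π a) else 0
    split_ifs <;> ring
  · intro l _ hl
    show (if l = π a then c a else 0) * _ = 0
    rw [if_neg hl, zero_mul]
  · intro h; exact absurd (Finset.mem_univ _) h

lemma E_diag (c : Fin n → k) : E (n := n) c id = Matrix.diagonal c := by
  ext a b
  show (if b = a then c a else 0) = _
  rw [Matrix.diagonal_apply]
  by_cases h : a = b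
  · subst h; simp
  · rw [if_neg (Ne.symm h), if_neg h]

lemma E_invol (c : Fin n → k) (π : Fin n → Fin n) (hπ : ∀ i, π (π i) = i)
    (hc : ∀ i, c i * c (π i) = 1) : E c π * E c π = 1 := by
  rw [E_mul, show (fun i => c i * c (π i)) = fun _ => (1 : k) from funext hc,
    show (fun i => π (π i)) = fun i => i from funext hπ]
  rw [show (fun i : Fin n => i) = id from rfl, E_diag, Matrix.diagonal_one]

lemma diag4 (d : Fin n → k) (hd : ∀ i, d i ≠ 0)
    (hdet : (∏ i, d i) * (∏ i, d i) = 1) :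
    ∃ l : List (Matrix (Fin n) (Fin n) k),
      (∀ M ∈ l, M * M = 1) ∧ l.length = 4 ∧ l.prod = Matrix.diagonal d := by
  classical
  set d' : ℕ → k := fun m => if h : m < n then d ⟨m, h⟩ else 1 with hd'
  set q : ℕ → k := fun m => ∏ t ∈ Finset.range m, d' t with hq
  have hd'0 : ∀ m, d' m ≠ 0 := by
    intro m; rw [hd']; dsimp only; split_ifs with h
    · exact hd _
    · exact one_ne_zero
  have hd'v : ∀ i : Fin n, d' (i : ℕ) = d i := by
    intro i; rw [hd']; dsimp only; rw [dif_pos i.isLt]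
  have hq0 : ∀ m, q m ≠ 0 := fun m => Finset.prod_ne_zero_iff.mpr fun t _ => hd'0 t
  have hqs : ∀ m, q (m + 1) = q m * d' m := fun m => Finset.prod_range_succ _ m
  have hqn : q n * q n = 1 := by
    have : q n = ∏ i, d i := by
      rw [hq]; dsimp only
      rw [← Fin.prod_univ_eq_prod_range]
      exact Finset.prod_congr rfl fun i _ => hd'v i
    rw [this]; exact hdet
  set aN : ℕ → k := fun m => if Even m then q (m + 1) else (q m)⁻¹ with haN
  set bN : ℕ → k := fun m => if Even m then (q m)⁻¹ else q (m + 1) with hbN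
  have haNe : ∀ m, Even m → aN m = q (m + 1) := by
    intro m h; rw [haN]; dsimp only; rw [if_pos h]
  have haNo : ∀ m, ¬ Even m → aN m = (q m)⁻¹ := by
    intro m h; rw [haN]; dsimp only; rw [if_neg h]
  have hbNe : ∀ m, Even m → bN m = (q m)⁻¹ := by
    intro m h; rw [hbN]; dsimp only; rw [if_pos h]
  have hbNo : ∀ m, ¬ Even m → bN m = q (m + 1) := by
    intro m h; rw [hbN]; dsimp only; rw [if_neg h]
  have haN0 : ∀ m, aN m ≠ 0 := by
    intro m; rw [haN]; dsimp only; split_ifs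
    · exact hq0 _
    · exact inv_ne_zero (hq0 _)
  set σ : Fin n → Fin n := fun i => if Even (i : ℕ) then
      (if h2 : (i : ℕ) + 1 < n then ⟨(i : ℕ) + 1, h2⟩ else i) else
      ⟨(i : ℕ) - 1, Nat.lt_of_le_of_lt (Nat.sub_le _ _) i.isLt⟩ with hσ
  set τ : Fin n → Fin n := fun i => if (i : ℕ) = 0 then i else (if Even (i : ℕ) then
      ⟨(i : ℕ) - 1, Nat.lt_of_le_of_lt (Nat.sub_le _ _) i.isLt⟩ else
      (if h2 : (i : ℕ) + 1 < n then ⟨(i : ℕ) + 1, h2⟩ else i)) with hτ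
  -- value computations for σ
  have hσe1 : ∀ (i : Fin n) (h : Even (i : ℕ)) (h2 : (i : ℕ) + 1 < n),
      σ i = ⟨(i : ℕ) + 1, h2⟩ := by
    intro i h h2; rw [hσ]; dsimp only; rw [if_pos h, dif_pos h2]
  have hσe2 : ∀ (i : Fin n) (h : Even (i : ℕ)) (h2 : ¬ ((i : ℕ) + 1 < n)), σ i = i := by
    intro i h h2; rw [hσ]; dsimp only; rw [if_pos h, dif_neg h2]
  have hσo : ∀ (i : Fin n) (h : ¬ Even (i : ℕ)),
      σ i = ⟨(i : ℕ) - 1, Nat.lt_of_le_of_lt (Nat.sub_le _ _) i.isLt⟩ := by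
    intro i h; rw [hσ]; dsimp only; rw [if_neg h]
  have hτ0 : ∀ (i : Fin n) (h : (i : ℕ) = 0), τ i = i := by
    intro i h; rw [hτ]; dsimp only; rw [if_pos h]
  have hτe : ∀ (i : Fin n) (h0 : (i : ℕ) ≠ 0) (h : Even (i : ℕ)),
      τ i = ⟨(i : ℕ) - 1, Nat.lt_of_le_of_lt (Nat.sub_le _ _) i.isLt⟩ := by
    intro i h0 h; rw [hτ]; dsimp only; rw [if_neg h0, if_pos h]
  have hτo1 : ∀ (i : Fin n) (h : ¬ Even (i : ℕ)) (h2 : (i : ℕ) + 1 < n),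
      τ i = ⟨(i : ℕ) + 1, h2⟩ := by
    intro i h h2
    have h0 : (i : ℕ) ≠ 0 := by
      intro hh; rw [hh] at h; exact h Even.zero
    rw [hτ]; dsimp only; rw [if_neg h0, if_neg h, dif_pos h2]
  have hτo2 : ∀ (i : Fin n) (h : ¬ Even (i : ℕ)) (h2 : ¬ ((i : ℕ) + 1 < n)), τ i = i := by
    intro i h h2
    have h0 : (i : ℕ) ≠ 0 := by
      intro hh; rw [hh] at h; exact h Even.zero
    rw [hτ]; dsimp only; rw [if_neg h0, if_neg h, dif_neg h2]
  -- key facts for σ, a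
  have hσσ : ∀ i, σ (σ i) = i := by
    intro i
    by_cases h : Even (i : ℕ)
    · by_cases h2 : (i : ℕ) + 1 < n
      · rw [hσe1 i h h2]
        have hodd : ¬ Even ((i : ℕ) + 1) := by simp [Nat.even_add_one, h]
        rw [hσo ⟨(i : ℕ) + 1, h2⟩ hodd]
        exact Fin.ext (by simp)
      · rw [hσe2 i h h2, hσe2 i h h2]
    · have h1 : 1 ≤ (i : ℕ) := by
        rcases Nat.eq_zero_or_pos (i : ℕ) with h0 | h0
        · rw [h0] at h; exact absurd Even.zero h
        · exact h0
      rw [hσo i h]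
      have heven : Even (((i : ℕ) - 1 : ℕ)) := by
        rcases Nat.even_or_odd (i : ℕ) with he | ho
        · exact absurd he h
        · obtain ⟨m, hm⟩ := ho
          refine ⟨m, ?_⟩; omega
      have h2 : ((i : ℕ) - 1) + 1 < n := by
        have := i.isLt; omega
      rw [hσe1 ⟨(i : ℕ) - 1, _⟩ heven h2]
      exact Fin.ext (by simp; omega)
  have haσ : ∀ i : Fin n, aN (i : ℕ) * aN ((σ i : Fin n) : ℕ) = 1 := by
    intro i
    by_cases h : Even (i : ℕ)
    · by_cases h2 : (i : ℕ) + 1 < n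
      · rw [hσe1 i h h2]
        have hodd : ¬ Even ((i : ℕ) + 1) := by simp [Nat.even_add_one, h]
        rw [haNe _ h]
        show q ((i : ℕ) + 1) * aN ((i : ℕ) + 1) = 1
        rw [haNo _ hodd]
        exact mul_inv_cancel₀ (hq0 _)
      · rw [hσe2 i h h2, haNe _ h]
        have : (i : ℕ) + 1 = n := by have := i.isLt; omega
        rw [this]
        exact hqn
    · have h1 : 1 ≤ (i : ℕ) := by
        rcases Nat.eq_zero_or_pos (i : ℕ) with h0 | h0
        · rw [h0] at h; exact absurd Even.zero h
        · exact h0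
      rw [hσo i h, haNo _ h]
      have heven : Even (((i : ℕ) - 1 : ℕ)) := by
        rcases Nat.even_or_odd (i : ℕ) with he | ho
        · exact absurd he h
        · obtain ⟨m, hm⟩ := ho
          refine ⟨m, ?_⟩; omega
      show (q (i : ℕ))⁻¹ * aN ((i : ℕ) - 1) = 1
      rw [haNe _ heven, show ((i : ℕ) - 1) + 1 = (i : ℕ) by omega]
      exact inv_mul_cancel₀ (hq0 _)
  -- key facts for τ, b
  have hττ : ∀ i, τ (τ i) = i := by
    intro i
    by_cases h0 : (i : ℕ) = 0
    · rw [hτ0 i h0, hτ0 i h0]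
    · by_cases h : Even (i : ℕ)
      · rw [hτe i h0 h]
        have h1 : 1 ≤ (i : ℕ) := Nat.pos_of_ne_zero h0
        have hodd : ¬ Even ((i : ℕ) - 1) := by
          intro he
          obtain ⟨m, hm⟩ := he
          obtain ⟨m', hm'⟩ := h
          omega
        have h2 : ((i : ℕ) - 1) + 1 < n := by have := i.isLt; omega
        rw [hτo1 ⟨(i : ℕ) - 1, _⟩ hodd h2]
        exact Fin.ext (by simp; omega)
      · by_cases h2 : (i : ℕ) + 1 < n
        · rw [hτo1 i h h2]
          have heven : Even ((i : ℕ) + 1) := by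
            rcases Nat.even_or_odd (i : ℕ) with he | ho
            · exact absurd he h
            · obtain ⟨m, hm⟩ := ho
              refine ⟨m + 1, ?_⟩; omega
          have h0' : ((i : ℕ) + 1) ≠ 0 := by omega
          rw [hτe ⟨(i : ℕ) + 1, h2⟩ h0' heven]
          exact Fin.ext (by simp)
        · rw [hτo2 i h h2, hτo2 i h h2]
  have hbτ : ∀ i : Fin n, bN (i : ℕ) * bN ((τ i : Fin n) : ℕ) = 1 := by
    intro i
    by_cases h0 : (i : ℕ) = 0
    · rw [hτ0 i h0, hbNe _ (by rw [h0]; exact Even.zero), h0]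
      rw [hq]; dsimp only
      simp
    · by_cases h : Even (i : ℕ)
      · rw [hτe i h0 h, hbNe _ h]
        have h1 : 1 ≤ (i : ℕ) := Nat.pos_of_ne_zero h0
        have hodd : ¬ Even ((i : ℕ) - 1) := by
          intro he
          obtain ⟨m, hm⟩ := he
          obtain ⟨m', hm'⟩ := h
          omega
        show (q (i : ℕ))⁻¹ * bN ((i : ℕ) - 1) = 1
        rw [hbNo _ hodd, show ((i : ℕ) - 1) + 1 = (i : ℕ) by omega]
        exact inv_mul_cancel₀ (hq0 _)
      · by_cases h2 : (i : ℕ) + 1 < n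
        · rw [hτo1 i h h2, hbNo _ h]
          have heven : Even ((i : ℕ) + 1) := by
            rcases Nat.even_or_odd (i : ℕ) with he | ho
            · exact absurd he h
            · obtain ⟨m, hm⟩ := ho
              refine ⟨m + 1, ?_⟩; omega
          show q ((i : ℕ) + 1) * bN ((i : ℕ) + 1) = 1
          rw [hbNe _ heven]
          exact mul_inv_cancel₀ (hq0 _)
        · rw [hτo2 i h h2, hbNo _ h]
          have : (i : ℕ) + 1 = n := by have := i.isLt; omega
          rw [this]
          exact hqn
  have hbN0 : ∀ m, bN m ≠ 0 := by
    intro m; rw [hbN]; dsimp only; split_ifs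
    · exact inv_ne_zero (hq0 _)
    · exact hq0 _
  have hab : ∀ i : Fin n, aN (i : ℕ) * bN (i : ℕ) = d i := by
    intro i
    by_cases h : Even (i : ℕ)
    · rw [haNe _ h, hbNe _ h, hqs, ← hd'v i]
      rw [mul_comm (q (i : ℕ)) (d' (i : ℕ)), mul_assoc, mul_inv_cancel₀ (hq0 _), mul_one]
    · rw [haNo _ h, hbNo _ h, hqs, ← hd'v i, ← mul_assoc, inv_mul_cancel₀ (hq0 _), one_mul]
  -- the four involutions
  set a : Fin n → k := fun i => aN (i : ℕ) with ha
  set b : Fin n → k := fun i => bN (i : ℕ) with hb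
  set J1 := E a σ with hJ1
  set J2 := E (fun _ : Fin n => (1 : k)) σ with hJ2
  set J3 := E b τ with hJ3
  set J4 := E (fun _ : Fin n => (1 : k)) τ with hJ4
  have hJ1i : J1 * J1 = 1 := E_invol a σ hσσ fun i => by
    rw [ha]; dsimp only; exact haσ i
  have hJ2i : J2 * J2 = 1 := E_invol _ σ hσσ fun i => by rw [one_mul]
  have hJ3i : J3 * J3 = 1 := E_invol b τ hττ fun i => by
    rw [hb]; dsimp only; exact hbτ i
  have hJ4i : J4 * J4 = 1 := E_invol _ τ hττ fun i => by rw [one_mul]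
  have hJ12 : J1 * J2 = Matrix.diagonal a := by
    rw [hJ1, hJ2, E_mul]
    rw [show (fun i => a i * 1) = a from funext fun i => mul_one _,
      show (fun i => σ (σ i)) = id from funext hσσ, E_diag]
  have hJ34 : J3 * J4 = Matrix.diagonal b := by
    rw [hJ3, hJ4, E_mul]
    rw [show (fun i => b i * 1) = b from funext fun i => mul_one _,
      show (fun i => τ (τ i)) = id from funext hττ, E_diag]
  refine ⟨[J1, J2, J3, J4], ?_, rfl, ?_⟩
  · intro M hM
    simp only [List.mem_cons, List.not_mem_nil, or_false] at hM
    rcases hM with h | h | h | h <;> subst h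
    exacts [hJ1i, hJ2i, hJ3i, hJ4i]
  · rw [List.prod_cons, List.prod_cons, List.prod_cons, List.prod_singleton]
    calc J1 * (J2 * (J3 * J4)) = (J1 * J2) * (J3 * J4) := by rw [mul_assoc]
      _ = Matrix.diagonal a * Matrix.diagonal b := by rw [hJ12, hJ34]
      _ = Matrix.diagonal d := by
          rw [Matrix.diagonal_mul_diagonal]
          exact congrArg Matrix.diagonal (funext fun i => hab i)

end InvolProof

/-- Over a field `k` of characteristic not `2` and for `n ≥ 2`, every element of
`SL(n, k)` can be written as a product of at most `2(n+1)` elements of `GL(n, k)`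
each of which squares to the identity. -/
theorem specialLinearGroup_eq_prod_involutions (n : ℕ) (hn : 2 ≤ n) (k : Type*)
    [Field k] (hchar : ringChar k ≠ 2) (g : Matrix.SpecialLinearGroup (Fin n) k) :
    ∃ l : List (Matrix (Fin n) (Fin n) k),
      (∀ M ∈ l, M * M = 1) ∧ l.length ≤ 2 * (n + 1) ∧
      l.prod = (g : Matrix (Fin n) (Fin n) k) := by
  classical
  open InvolProof in
  have hdet : Matrix.det (g : Matrix (Fin n) (Fin n) k) = 1 := g.prop
  obtain ⟨L, R, hL, hR, hLl, hRl, hred⟩ :=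
    InvolProof.reduce (n - 1) (Nat.sub_le n 1) (g : Matrix (Fin n) (Fin n) k)
      (by rw [hdet]; exact isUnit_one)
  set B := L.prod * (g : Matrix (Fin n) (Fin n) k) * R.prod with hB
  set d : Fin n → k := fun i => B i i with hd
  have hBdiag : B = Matrix.diagonal d := by
    ext a b
    by_cases hab : a = b
    · subst hab
      rw [Matrix.diagonal_apply_eq]
    · rw [Matrix.diagonal_apply_ne _ hab]
      by_cases ha : (a : ℕ) < n - 1
      · exact (hred a b ha hab).1
      · have hvne : (b : ℕ) ≠ (a : ℕ) := fun h => hab (Fin.ext h).symm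
        have hb : (b : ℕ) < n - 1 := by
          have h1 := a.isLt
          have h2 := b.isLt
          omega
        exact (hred b a hb (Ne.symm hab)).2
  have hdd : (∏ i, d i) * (∏ i, d i) = 1 := by
    have h1 : B.det = ∏ i, d i := by rw [hBdiag, Matrix.det_diagonal]
    rw [← h1]
    have e : B.det = L.prod.det * Matrix.det (g : Matrix (Fin n) (Fin n) k) * R.prod.det := by
      rw [hB, Matrix.det_mul, Matrix.det_mul]
    rw [e, hdet, mul_one]
    calc (L.prod.det * R.prod.det) * (L.prod.det * R.prod.det)
        = (L.prod.det * L.prod.det) * (R.prod.det * R.prod.det) := by ring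
      _ = 1 := by rw [InvolProof.det_sq_list L hL, InvolProof.det_sq_list R hR, mul_one]
  have hd0 : ∀ i, d i ≠ 0 := by
    have hprod : (∏ i, d i) ≠ 0 := by
      intro h
      rw [h, zero_mul] at hdd
      exact zero_ne_one hdd
    intro i
    exact Finset.prod_ne_zero_iff.mp hprod i (Finset.mem_univ i)
  obtain ⟨lJ, hlJ, hlJlen, hlJprod⟩ := InvolProof.diag4 d hd0 hdd
  refine ⟨L.reverse ++ (lJ ++ R.reverse), ?_, ?_, ?_⟩
  · intro M hM
    rcases List.mem_append.mp hM with h | h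
    · exact hL M (List.mem_reverse.mp h)
    · rcases List.mem_append.mp h with h' | h'
      · exact hlJ M h'
      · exact hR M (List.mem_reverse.mp h')
  · simp only [List.length_append, List.length_reverse, hLl, hRl, hlJlen]
    omega
  · rw [List.prod_append, List.prod_append, hlJprod, ← hBdiag, hB]
    rw [show L.reverse.prod * (L.prod * (g : Matrix (Fin n) (Fin n) k) * R.prod * R.reverse.prod)
        = (L.reverse.prod * L.prod) * (g : Matrix (Fin n) (Fin n) k) * (R.prod * R.reverse.prod)
      from by noncomm_ring]
    rw [InvolProof.rev_prod_sq_list L hL, InvolProof.prod_sq_list R hR, one_mul, mul_one]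
end

section
/- Let φ ∈ PGL(2, ℂ(t)) be represented by a matrix with determinant a nonzero polynomial P(t) ∈ ℂ[t]. Then φ is a composition of at most 8 involutions of the group of birational transformations, where the scaling z₀ ↦ z₀/P(t) is the composition of the two involutions z₀ ↦ 1/(z₀P(t)) and z₀ ↦ 1/z₀. -/
/-- `PGL(2, ℂ(t))`, the projective general linear group over the rational
function field `ℂ(t)`. -/
abbrev PGL2RatFunc : Type :=
  GL (Fin 2) (RatFunc ℂ) ⧸ Subgroup.center (GL (Fin 2) (RatFunc ℂ))

private lemma traceZero_sq_scalar {K : Type*} [Field K] (B : Matrix (Fin 2) (Fin 2) K)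
    (h : B 1 1 = - B 0 0) :
    B * B = (B 0 0 * B 0 0 + B 0 1 * B 1 0) • (1 : Matrix (Fin 2) (Fin 2) K) := by
  ext i j
  fin_cases i <;> fin_cases j <;>
    simp [Matrix.mul_apply, Fin.sum_univ_two, h] <;> ring

private lemma mk_involution (B : GL (Fin 2) (RatFunc ℂ))
    (h : (B : Matrix (Fin 2) (Fin 2) (RatFunc ℂ)) 1 1
        = - (B : Matrix (Fin 2) (Fin 2) (RatFunc ℂ)) 0 0) :
    (QuotientGroup.mk B : PGL2RatFunc) * QuotientGroup.mk B = 1 := by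
  rw [← QuotientGroup.mk_mul, QuotientGroup.eq_one_iff]
  refine Subgroup.mem_center_iff.mpr fun g => ?_
  ext : 1
  simp only [Units.val_mul]
  rw [traceZero_sq_scalar _ h, Matrix.smul_mul, Matrix.mul_smul, Matrix.one_mul,
    Matrix.mul_one]

/-- An element `φ` of `PGL(2, ℂ(t))` represented by a matrix whose determinant is a
nonzero polynomial `P(t) ∈ ℂ[t]` is a composition of at most `8` involutions. -/
theorem pgl2_ratFunc_comp_of_at_most_eight_involutions
    (M : GL (Fin 2) (RatFunc ℂ)) (P : Polynomial ℂ) (hP : P ≠ 0)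
    (hdet : (M : Matrix (Fin 2) (Fin 2) (RatFunc ℂ)).det =
      algebraMap (Polynomial ℂ) (RatFunc ℂ) P) :
    ∃ l : List PGL2RatFunc, (∀ ι ∈ l, ι * ι = 1) ∧ l.length ≤ 8 ∧
      l.prod = (QuotientGroup.mk M : PGL2RatFunc) := by
  set K := RatFunc ℂ
  set m : Matrix (Fin 2) (Fin 2) K := (M : Matrix (Fin 2) (Fin 2) K) with hm
  -- find a trace-zero invertible matrix A with trace (A * m) = 0
  obtain ⟨a, b, c, heq, hne⟩ :
      ∃ a b c : K, a * (m 0 0 - m 1 1) + b * m 1 0 + c * m 0 1 = 0 ∧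
        a * a + b * c ≠ 0 := by
    by_cases h10 : m 1 0 = 0
    · by_cases h01 : m 0 1 = 0
      · exact ⟨0, 1, 1, by rw [h10, h01]; ring, by norm_num⟩
      · by_cases hc : m 1 1 - m 0 0 = 0
        · exact ⟨m 0 1, 0, m 1 1 - m 0 0, by rw [h10]; ring,
            by simpa [hc, mul_self_ne_zero] using h01⟩
        · refine ⟨m 0 1, (1 - m 0 1 * m 0 1) / (m 1 1 - m 0 0), m 1 1 - m 0 0,
            by rw [h10]; ring, ?_⟩
          rw [div_mul_cancel₀ _ hc]; norm_num
    · by_cases h01 : m 0 1 = 0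
      · by_cases hc : m 1 1 - m 0 0 = 0
        · exact ⟨m 1 0, m 1 1 - m 0 0, 0, by rw [h01]; ring,
            by simpa [hc, mul_self_ne_zero] using h10⟩
        · refine ⟨m 1 0, m 1 1 - m 0 0, (1 - m 1 0 * m 1 0) / (m 1 1 - m 0 0),
            by rw [h01]; ring, ?_⟩
          rw [mul_comm (m 1 1 - m 0 0), div_mul_cancel₀ _ hc]
          norm_num
      · exact ⟨0, m 0 1, -m 1 0, by ring, by
          simpa [neg_eq_zero, mul_eq_zero] using not_or.mpr ⟨h01, h10⟩⟩
  set Amat : Matrix (Fin 2) (Fin 2) K := !![a, b; c, -a] with hAmat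
  have hAdet : Amat.det ≠ 0 := by
    simp only [hAmat, Matrix.det_fin_two_of]
    intro h
    apply hne
    linear_combination -h
  set A : GL (Fin 2) K := Matrix.GeneralLinearGroup.mkOfDetNeZero Amat hAdet with hA
  have hAval : (A : Matrix (Fin 2) (Fin 2) K) = Amat := rfl
  have hAinv : (QuotientGroup.mk A : PGL2RatFunc) * QuotientGroup.mk A = 1 := by
    apply mk_involution
    rw [hAval, hAmat]
    simp
  have hAMval : ((A * M : GL (Fin 2) K) : Matrix (Fin 2) (Fin 2) K) = Amat * m := by
    simp [hAval, hm]
  have hAMinv : (QuotientGroup.mk (A * M) : PGL2RatFunc) * QuotientGroup.mk (A * M) = 1 := by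
    apply mk_involution
    rw [hAMval, hAmat]
    simp [Matrix.mul_apply, Fin.sum_univ_two]
    linear_combination heq
  refine ⟨[QuotientGroup.mk A, QuotientGroup.mk (A * M)], ?_, by norm_num, ?_⟩
  · intro ι hι
    rcases List.mem_pair.mp hι with h | h <;> rw [h]
    exacts [hAinv, hAMinv]
  · have : (QuotientGroup.mk (A * A) : PGL2RatFunc) = 1 := by
      rw [QuotientGroup.mk_mul]; exact hAinv
    calc ([QuotientGroup.mk A, QuotientGroup.mk (A * M)] : List PGL2RatFunc).prod
        = (QuotientGroup.mk (A * A) : PGL2RatFunc) * QuotientGroup.mk M := by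
          simp [← QuotientGroup.mk_mul, mul_assoc]
      _ = QuotientGroup.mk M := by rw [this, one_mul]
end
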